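/- In any compacted binary trie with n ≥ 2 external nodes, the sum I of the lengths of internal extents satisfies I ≤ (n-1)·((n-2)/2 + C), where C is the sum of the lengths of all compacted paths in the trie; i.e., 2I ≤ (n-1)(n-2) + 2(n-1)C. -/
import Mathlib


/-- A compacted binary trie: each node is labelled with a compacted path (a binary string). -/
inductive CTrie where
  | leaf : List Bool → CTrie
  | node : List Bool → CTrie → CTrie → CTrie

/-- Number of external nodes (leaves). -/
def CTrie.leaves : CTrie → ℕ
  | .leaf _ => 1
  | .node _ l r => l.leaves + r.leaves

/-- Sum of the lengths of the internal extents. -/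
def CTrie.I : CTrie → ℕ
  | .leaf _ => 0
  | .node c l r => l.I + r.I + (c.length + 1) * ((l.leaves - 1) + (r.leaves - 1)) + c.length

/-- Sum of the lengths of all compacted paths. -/
def CTrie.C : CTrie → ℕ
  | .leaf c => c.length
  | .node c l r => l.C + r.C + c.length

lemma CTrie.leaves_pos (t : CTrie) : 1 ≤ t.leaves := by
  induction t with
  | leaf c => simp [CTrie.leaves]
  | node c l r hl hr => simp [CTrie.leaves]; omega

lemma key (x y il ir cl cr k : ℕ)
    (h1 : 2 * il ≤ x * (x - 1) + 2 * x * cl)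
    (h2 : 2 * ir ≤ y * (y - 1) + 2 * y * cr) :
    2 * (il + ir + (k + 1) * (x + y) + k) ≤
      (x + y + 1) * (x + y) + 2 * (x + y + 1) * (cl + cr + k) := by
  rcases x with _ | z <;> rcases y with _ | w <;>
    simp only [Nat.add_sub_cancel, Nat.zero_sub, Nat.succ_sub_one] at * <;> nlinarith

lemma CTrie.bound (t : CTrie) :
    2 * t.I ≤ (t.leaves - 1) * (t.leaves - 2) + 2 * (t.leaves - 1) * t.C := by
  induction t with
  | leaf c => simp [CTrie.I, CTrie.leaves]
  | node c l r hl hr =>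
    obtain ⟨x, hx⟩ : ∃ x, l.leaves = x + 1 :=
      ⟨l.leaves - 1, by have := l.leaves_pos; omega⟩
    obtain ⟨y, hy⟩ : ∃ y, r.leaves = y + 1 :=
      ⟨r.leaves - 1, by have := r.leaves_pos; omega⟩
    simp only [CTrie.I, CTrie.leaves, CTrie.C]
    rw [hx] at hl ⊢
    rw [hy] at hr ⊢
    simp only [Nat.add_sub_cancel] at hl hr ⊢
    have hg : x + 1 + (y + 1) - 1 = x + y + 1 := by omega
    have hg2 : x + 1 + (y + 1) - 2 = x + y := by omega
    rw [hg, hg2]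
    exact key x y l.I r.I l.C r.C c.length hl hr

theorem internal_extent_sum_bound (t : CTrie) (h : 2 ≤ t.leaves) :
    2 * t.I ≤ (t.leaves - 1) * (t.leaves - 2) + 2 * (t.leaves - 1) * t.C :=
  t.bound
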